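/- Let (d_n)_{n∈ℕ} be a sequence of integers with d_n ≥ 1 and let (F_n)_{n∈ℕ} be a sequence of finite fields. For each n, let Γ_n be the subgroup of SL(8d_n, F_n) consisting of all block-diagonal matrices diag(A, B) with A, B ∈ SL(4d_n, F_n) (A acting on the first 4d_n coordinates and B on the last 4d_n coordinates), so Γ_n ≅ SL(4d_n, F_n) × SL(4d_n, F_n). Then ∏_{n∈ℕ} SL(8d_n, F_n) is finitely generated over the subgroup ∏_{n∈ℕ} Γ_n: there exists a finite subset S of ∏_n SL(8d_n, F_n) such that ∏_n SL(8d_n, F_n) = ⟨∏_n Γ_n ∪ S⟩. -/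

import Mathlib

/-- The block-diagonal matrix `diag(A, B)` of size `8d`, where `A` acts on the first
`4d` coordinates and `B` on the last `4d` coordinates. -/
def diagPair {d : ℕ} {F : Type*} [Zero F]
    (A B : Matrix (Fin (4 * d)) (Fin (4 * d)) F) :
    Matrix (Fin (8 * d)) (Fin (8 * d)) F :=
  Matrix.of fun i j =>
    if hi : (i : ℕ) < 4 * d then
      (if hj : (j : ℕ) < 4 * d then A ⟨i, hi⟩ ⟨j, hj⟩ else 0)
    else
      (if hj : (j : ℕ) < 4 * d then 0
       else B ⟨(i : ℕ) - 4 * d, by have := i.isLt; omega⟩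
              ⟨(j : ℕ) - 4 * d, by have := j.isLt; omega⟩)

/-!
Identify `SL(8d, F)` with `SL(ν ⊕ ν, F)`, `|ν| = 4d`, let `Γ` be its block-diagonal subgroup
`SL(ν, F) × SL(ν, F)`, and let `u = [[1, 1], [0, 1]]`, `w = [[0, 1], [-1, 0]]` in block form.
Every `g` can be written `γ₀ x₁ γ₁ ⋯ xₖ γₖ` with `γᵢ ∈ Γ` and a word `x₁ ⋯ xₖ` in `u, w` that
depends neither on `d` nor on `F`; the factors can then be chosen coordinatewise in the product.

The word comes from the following facts. Multiplying `g` on the right by a suitable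
`[[1, 0], [z, 1]]` makes its top-left block invertible, and the Schur complement then gives
`g [[1, 0], [z, 1]] = [[1, 0], [Y, 1]] diag(a, s) [[1, X], [0, 1]]` with `det a * det s = 1`;
`diag(a, s)` differs from an element of `Γ` by `diag(s⁻¹, s)`, a product of two block Weyl
elements `[[0, X], [-X⁻¹, 0]] = [[1, X], [0, 1]] [[1, 0], [-X⁻¹, 1]] [[1, X], [0, 1]]`.
Every matrix of even size is a sum of two matrices of determinant one, so `[[1, X], [0, 1]]` is a
product of two `Γ`-conjugates of `u`; and `w` conjugates upper to lower unitriangular blocks.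
-/

open Matrix Pointwise

namespace Subgroup

variable {G : Type*} [Group G]

def interleave (H : Subgroup G) : List G → Set G
  | [] => H
  | x :: l => (H : Set G) * {x} * interleave H l

variable {H : Subgroup G}

lemma mem_interleave_cons {x y : G} {l : List G} :
    y ∈ H.interleave (x :: l) ↔ ∃ h ∈ H, ∃ y' ∈ H.interleave l, h * x * y' = y := by
  constructor
  · rintro ⟨_, ⟨h, hh, _, rfl, rfl⟩, y', hy', rfl⟩
    exact ⟨h, hh, y', hy', rfl⟩
  · rintro ⟨h, hh, y', hy', rfl⟩
    exact ⟨_, ⟨h, hh, x, rfl, rfl⟩, y', hy', rfl⟩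

lemma mul_mul_mem_interleave_cons {h x y : G} {l : List G} (hh : h ∈ H)
    (hy : y ∈ H.interleave l) : h * x * y ∈ H.interleave (x :: l) :=
  Set.mul_mem_mul (Set.mul_mem_mul hh rfl) hy

lemma mem_interleave_singleton (x : G) : x ∈ H.interleave [x] := by
  simpa using mul_mul_mem_interleave_cons (x := x) (l := []) H.one_mem H.one_mem

lemma mul_mem_interleave {h y : G} {l : List G} (hh : h ∈ H) (hy : y ∈ H.interleave l) :
    h * y ∈ H.interleave l := by
  cases l with
  | nil => exact H.mul_mem hh hy
  | cons x l =>
    obtain ⟨h', hh', z, hz, rfl⟩ := mem_interleave_cons.1 hy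
    simpa only [mul_assoc] using mul_mul_mem_interleave_cons (H.mul_mem hh hh') hz

lemma mul_mem_interleave_append {y z : G} {l₁ l₂ : List G} (hy : y ∈ H.interleave l₁)
    (hz : z ∈ H.interleave l₂) : y * z ∈ H.interleave (l₁ ++ l₂) := by
  induction l₁ generalizing y with
  | nil => exact mul_mem_interleave hy hz
  | cons x l ih =>
    obtain ⟨h, hh, y', hy', rfl⟩ := mem_interleave_cons.1 hy
    rw [List.cons_append]
    simpa only [mul_assoc] using mul_mul_mem_interleave_cons hh (ih hy')

lemma map_mem_interleave {G' : Type*} [Group G'] (f : G →* G') {y : G} {l : List G}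
    (hy : y ∈ H.interleave l) : f y ∈ (H.map f).interleave (l.map f) := by
  induction l generalizing y with
  | nil => exact mem_map_of_mem f hy
  | cons x l ih =>
    obtain ⟨h, hh, y', hy', rfl⟩ := mem_interleave_cons.1 hy
    rw [List.map_cons]
    simpa only [map_mul] using mul_mul_mem_interleave_cons (mem_map_of_mem f hh) (ih hy')

lemma mem_interleave_pi {ι : Type*} {G : ι → Type*} [∀ i, Group (G i)]
    {H : ∀ i, Subgroup (G i)} {y : ∀ i, G i} {l : List (∀ i, G i)}
    (hy : ∀ i, y i ∈ (H i).interleave (l.map (Pi.evalMonoidHom G i))) :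
    y ∈ (pi Set.univ H).interleave l := by
  induction l generalizing y with
  | nil => exact fun i _ => hy i
  | cons x l ih =>
    choose h hh y' hy' hy using fun i => mem_interleave_cons.1 (hy i)
    obtain rfl : h * x * y' = y := funext hy
    exact mul_mul_mem_interleave_cons (fun i _ => hh i) (ih hy')

lemma interleave_subset_closure (l : List G) :
    H.interleave l ⊆ closure ((H : Set G) ∪ {x | x ∈ l}) := by
  induction l with
  | nil => exact fun y hy => subset_closure (Or.inl hy)
  | cons x l ih =>
    intro z hz
    obtain ⟨h, hh, y, hy, rfl⟩ := mem_interleave_cons.1 hz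
    refine mul_mem (mul_mem (subset_closure (Or.inl hh)) (subset_closure (Or.inr ?_)))
      (closure_mono ?_ (ih hy))
    · simp
    · exact Set.union_subset_union_right _ fun z hz => List.mem_cons_of_mem x hz

end Subgroup

/-- `z` maps `ker f` isomorphically, through `g`, onto a complement of `range f`. -/
theorem LinearMap.exists_injective_add_comp {K V W : Type*} [Field K] [AddCommGroup V]
    [Module K V] [AddCommGroup W] [Module K W] [FiniteDimensional K V] [FiniteDimensional K W]
    (f g : V →ₗ[K] W) (hdim : Module.finrank K V = Module.finrank K W)
    (hfg : range f ⊔ range g = ⊤) :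
    ∃ z : V →ₗ[K] V, Function.Injective (f + g ∘ₗ z) := by
  set π := (range f).mkQ
  have hπg : Function.Surjective (π ∘ₗ g) := by
    rintro ⟨w⟩
    obtain ⟨_, ⟨x, rfl⟩, _, ⟨y, rfl⟩, rfl⟩ :=
      Submodule.mem_sup.1 (hfg ▸ Submodule.mem_top (x := w))
    exact ⟨y, (Submodule.Quotient.eq _).2 (by simp)⟩
  obtain ⟨s, hs⟩ := (π ∘ₗ g).exists_rightInverse_of_surjective (range_eq_top.2 hπg)
  obtain ⟨p, hp⟩ := (ker f).subtype.exists_leftInverse_of_injective (ker f).ker_subtype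
  have hfin : Module.finrank K (ker f) = Module.finrank K (W ⧸ range f) := by
    have := f.finrank_range_add_finrank_ker
    have := (range f).finrank_quotient_add_finrank
    omega
  obtain ⟨e⟩ := FiniteDimensional.nonempty_linearEquiv_of_finrank_eq hfin
  refine ⟨s ∘ₗ e.toLinearMap ∘ₗ p, (injective_iff_map_eq_zero _).2 fun v hv => ?_⟩
  have hpv : p v = 0 := by
    have hfv : π (f v) = 0 := (Submodule.Quotient.mk_eq_zero _).2 (mem_range_self f v)
    have hgz : π (g (s (e (p v)))) = e (p v) := LinearMap.congr_fun hs (e (p v))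
    simpa [hfv, hgz] using congrArg π hv
  have hv_ker : v ∈ ker f := by simpa [hpv] using hv
  simpa [hpv] using (congrArg Subtype.val (LinearMap.congr_fun hp ⟨v, hv_ker⟩)).symm

namespace Matrix

variable {ν : Type*} [Fintype ν] [DecidableEq ν]

lemma exists_isUnit_add_mul {F : Type*} [Field F] (a b : Matrix ν ν F)
    (hab : LinearMap.range a.mulVecLin ⊔ LinearMap.range b.mulVecLin = ⊤) :
    ∃ z : Matrix ν ν F, IsUnit (a + b * z) := by
  obtain ⟨z, hz⟩ := LinearMap.exists_injective_add_comp _ _ rfl hab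
  refine ⟨LinearMap.toMatrix' z, mulVec_injective_iff_isUnit.1 ?_⟩
  convert hz using 1
  ext v : 1
  simp [add_mulVec, ← mulVec_mulVec]

lemma exists_diagonal_eq_add_of_det_eq_one {R : Type*} [CommRing R]
    (hν : Even (Fintype.card ν)) (D : ν → R) :
    ∃ A B : Matrix ν ν R, A.det = 1 ∧ B.det = 1 ∧ diagonal D = A + B := by
  obtain ⟨k, hk⟩ := hν
  let e : ν ≃ Fin 2 × Fin k :=
    (Fintype.equivFin ν).trans ((finCongr (by omega)).trans finProdFinEquiv.symm)
  let A : Fin k → Matrix (Fin 2) (Fin 2) R := fun i => !![0, -1; 1, D (e.symm (1, i))]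
  let B : Fin k → Matrix (Fin 2) (Fin 2) R := fun i => !![D (e.symm (0, i)), 1; -1, 0]
  refine ⟨(blockDiagonal A).submatrix e e, (blockDiagonal B).submatrix e e, ?_, ?_, ?_⟩
  · simp [det_blockDiagonal, A, det_fin_two_of]
  · simp [det_blockDiagonal, B, det_fin_two_of]
  · have hAB : A + B = fun i => diagonal fun j => D (e.symm (j, i)) := by
      ext i j l
      fin_cases j <;> fin_cases l <;> simp [A, B]
    calc diagonal D = (blockDiagonal (A + B)).submatrix e e := by
          rw [hAB, blockDiagonal_diagonal, submatrix_diagonal_equiv]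
          simp
      _ = _ := by rw [blockDiagonal_add]; rfl

lemma exists_eq_add_of_det_eq_one {F : Type*} [Field F] (hν : Even (Fintype.card ν))
    (X : Matrix ν ν F) : ∃ A B : Matrix ν ν F, A.det = 1 ∧ B.det = 1 ∧ X = A + B := by
  obtain ⟨L, L', D, rfl⟩ := Pivot.exists_list_transvec_mul_diagonal_mul_list_transvec X
  obtain ⟨A, B, hA, hB, hD⟩ := exists_diagonal_eq_add_of_det_eq_one hν D
  refine ⟨_ * A * _, _ * B * _, ?_, ?_, by rw [hD, Matrix.mul_add, Matrix.add_mul]⟩ <;>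
    simp [hA, hB, TransvectionStruct.det_toMatrix_prod]

def SpecialLinearGroup.reindex {m n R : Type*} [Fintype m] [DecidableEq m] [Fintype n]
    [DecidableEq n] [CommRing R] (e : m ≃ n) :
    SpecialLinearGroup m R ≃* SpecialLinearGroup n R where
  toFun g := ⟨Matrix.reindex e e g, by rw [det_reindex_self, g.2]⟩
  invFun g := ⟨Matrix.reindex e.symm e.symm g, by rw [det_reindex_self, g.2]⟩
  left_inv g := by ext : 1; simp
  right_inv g := by ext : 1; simp
  map_mul' g h := Subtype.ext <|
    show Matrix.reindex e e (g * h : Matrix m m R) = Matrix.reindex e e g * Matrix.reindex e e h by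
      simp [reindex_apply, submatrix_mul_equiv]

end Matrix

namespace Matrix.SpecialLinearGroup

variable {ν R : Type*} [Fintype ν] [DecidableEq ν] [CommRing R]

def blockUpper (X : Matrix ν ν R) : SpecialLinearGroup (ν ⊕ ν) R :=
  ⟨fromBlocks 1 X 0 1, by simp⟩

def blockLower (Y : Matrix ν ν R) : SpecialLinearGroup (ν ⊕ ν) R :=
  ⟨fromBlocks 1 0 Y 1, by simp⟩

def blockDiag :
    SpecialLinearGroup ν R × SpecialLinearGroup ν R →* SpecialLinearGroup (ν ⊕ ν) R where
  toFun p := ⟨fromBlocks p.1 0 0 p.2, by simp [det_fromBlocks_zero₂₁]⟩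
  map_one' := Subtype.ext (by simp)
  map_mul' p q := Subtype.ext <|
    show fromBlocks _ 0 0 _ = fromBlocks _ 0 0 _ * fromBlocks _ 0 0 _ by
      simp [fromBlocks_multiply]

noncomputable def blockWeyl (X : Matrix ν ν R) : SpecialLinearGroup (ν ⊕ ν) R :=
  blockUpper X * blockLower (-X⁻¹) * blockUpper X

@[simp] lemma coe_blockUpper (X : Matrix ν ν R) :
    (blockUpper X : Matrix (ν ⊕ ν) (ν ⊕ ν) R) = fromBlocks 1 X 0 1 := rfl

@[simp] lemma coe_blockLower (Y : Matrix ν ν R) :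
    (blockLower Y : Matrix (ν ⊕ ν) (ν ⊕ ν) R) = fromBlocks 1 0 Y 1 := rfl

@[simp] lemma coe_blockDiag (p : SpecialLinearGroup ν R × SpecialLinearGroup ν R) :
    (blockDiag p : Matrix (ν ⊕ ν) (ν ⊕ ν) R) = fromBlocks p.1 0 0 p.2 := rfl

lemma coe_blockWeyl {X : Matrix ν ν R} (hX : IsUnit X.det) :
    (blockWeyl X : Matrix (ν ⊕ ν) (ν ⊕ ν) R) = fromBlocks 0 X (-X⁻¹) 0 := by
  simp [blockWeyl, fromBlocks_multiply, mul_nonsing_inv _ hX, nonsing_inv_mul _ hX]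

lemma blockUpper_add (X Y : Matrix ν ν R) :
    blockUpper (X + Y) = blockUpper X * blockUpper Y :=
  Subtype.ext (by simp [fromBlocks_multiply, add_comm])

lemma blockLower_neg (Y : Matrix ν ν R) : blockLower (-Y) = (blockLower Y)⁻¹ :=
  eq_inv_of_mul_eq_one_left <| Subtype.ext (by simp [fromBlocks_multiply, ← fromBlocks_one])

lemma blockDiag_mul_blockUpper_one_mul_blockDiag (A : SpecialLinearGroup ν R) :
    blockDiag (A, 1) * blockUpper 1 * blockDiag (A⁻¹, 1) = blockUpper (A : Matrix ν ν R) :=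
  Subtype.ext (by simp [fromBlocks_multiply, mul_adjugate])

lemma blockLower_eq_blockWeyl_mul [Fact (Even (Fintype.card ν))] (Y : Matrix ν ν R) :
    blockLower Y = blockWeyl 1 * blockUpper (-Y) * blockWeyl 1 * blockDiag (-1, -1) := by
  apply Subtype.ext
  simp [coe_blockWeyl, fromBlocks_multiply]

lemma coe_blockDiag_mul_blockWeyl_mul_blockWeyl {a s : Matrix ν ν R} (has : (a * s).det = 1)
    (hs : IsUnit s.det) :
    ((blockDiag (⟨a * s, has⟩, 1) * blockWeyl s⁻¹ * blockWeyl (-1) :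
      SpecialLinearGroup (ν ⊕ ν) R) : Matrix (ν ⊕ ν) (ν ⊕ ν) R) = fromBlocks a 0 0 s := by
  have h_neg_one : IsUnit (-1 : Matrix ν ν R).det := by
    simpa [det_neg] using isUnit_one.neg.pow _
  have h_inv_neg_one : (-1 : Matrix ν ν R)⁻¹ = -1 := inv_eq_left_inv (by simp)
  rw [coe_mul, coe_mul, coe_blockDiag, coe_blockWeyl (isUnit_nonsing_inv_det s hs),
    coe_blockWeyl h_neg_one]
  simp [fromBlocks_multiply, nonsing_inv_nonsing_inv s hs, Matrix.mul_assoc, h_inv_neg_one,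
    mul_nonsing_inv s hs]

theorem exists_eq_blockLower_mul_blockDiag_mul_blockWeyl (g : SpecialLinearGroup (ν ⊕ ν) R)
    (ha : IsUnit (g : Matrix (ν ⊕ ν) (ν ⊕ ν) R).toBlocks₁₁.det) :
    ∃ Y : Matrix ν ν R, ∃ γ ∈ (blockDiag : SpecialLinearGroup ν R × _ →* _).range,
      ∃ X X' : Matrix ν ν R,
        g = blockLower Y * γ * blockWeyl X * blockWeyl (-1) * blockUpper X' := by
  set a := (g : Matrix (ν ⊕ ν) (ν ⊕ ν) R).toBlocks₁₁
  set b := (g : Matrix (ν ⊕ ν) (ν ⊕ ν) R).toBlocks₁₂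
  set c := (g : Matrix (ν ⊕ ν) (ν ⊕ ν) R).toBlocks₂₁
  set d := (g : Matrix (ν ⊕ ν) (ν ⊕ ν) R).toBlocks₂₂
  have hg : (g : Matrix (ν ⊕ ν) (ν ⊕ ν) R) = fromBlocks a b c d := (fromBlocks_toBlocks _).symm
  let := invertibleOfIsUnitDet a ha
  set s := d - c * ⅟a * b
  have hdet : (a * s).det = 1 := by rw [det_mul, ← det_fromBlocks₁₁, ← hg, g.2]
  have hs : IsUnit s.det := IsUnit.of_mul_eq_one_right _ (by rwa [← det_mul])
  refine ⟨c * ⅟a, _, ⟨(⟨a * s, hdet⟩, 1), rfl⟩, s⁻¹, ⅟a * b, ?_⟩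
  ext : 1
  rw [mul_assoc (blockLower _), mul_assoc (blockLower _), coe_mul, coe_mul,
    coe_blockDiag_mul_blockWeyl_mul_blockWeyl hdet hs, hg, fromBlocks_eq_of_invertible₁₁]
  rfl

lemma range_toBlocks₁₁_sup_range_toBlocks₁₂ (g : SpecialLinearGroup (ν ⊕ ν) R) :
    LinearMap.range (g : Matrix (ν ⊕ ν) (ν ⊕ ν) R).toBlocks₁₁.mulVecLin ⊔
      LinearMap.range (g : Matrix (ν ⊕ ν) (ν ⊕ ν) R).toBlocks₁₂.mulVecLin = ⊤ := by
  refine eq_top_iff.2 fun y _ => Submodule.mem_sup.2 ?_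
  set v := ((g⁻¹ : SpecialLinearGroup (ν ⊕ ν) R) : Matrix (ν ⊕ ν) (ν ⊕ ν) R) *ᵥ Sum.elim y 0
  have hv : (g : Matrix (ν ⊕ ν) (ν ⊕ ν) R) *ᵥ v = Sum.elim y 0 := by
    rw [mulVec_mulVec, ← coe_mul, mul_inv_cancel, coe_one, one_mulVec]
  rw [← fromBlocks_toBlocks (g : Matrix (ν ⊕ ν) (ν ⊕ ν) R), fromBlocks_mulVec] at hv
  refine ⟨_, ⟨v ∘ Sum.inl, rfl⟩, _, ⟨v ∘ Sum.inr, rfl⟩, funext fun i => ?_⟩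
  simpa using congrFun hv (Sum.inl i)

section Field

open Subgroup

variable {F : Type*} [Field F]

lemma exists_isUnit_det_toBlocks₁₁_mul_blockLower (g : SpecialLinearGroup (ν ⊕ ν) F) :
    ∃ z : Matrix ν ν F, IsUnit (((g * blockLower z : SpecialLinearGroup (ν ⊕ ν) F) :
      Matrix (ν ⊕ ν) (ν ⊕ ν) F).toBlocks₁₁.det) := by
  obtain ⟨z, hz⟩ := exists_isUnit_add_mul _ _ (range_toBlocks₁₁_sup_range_toBlocks₁₂ g)
  refine ⟨z, ?_⟩
  rw [coe_mul, ← fromBlocks_toBlocks (g : Matrix (ν ⊕ ν) (ν ⊕ ν) F), coe_blockLower,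
    fromBlocks_multiply, toBlocks_fromBlocks₁₁]
  simpa only [Matrix.one_mul, Matrix.mul_one, Matrix.mul_zero, add_zero,
    ← isUnit_iff_isUnit_det] using hz

lemma blockUpper_mem_interleave (hν : Even (Fintype.card ν)) (X : Matrix ν ν F) :
    blockUpper X ∈ blockDiag.range.interleave [blockUpper 1, blockUpper 1] := by
  have hconj (A : SpecialLinearGroup ν F) :
      blockUpper (A : Matrix ν ν F) ∈ blockDiag.range.interleave [blockUpper 1] := by
    rw [← blockDiag_mul_blockUpper_one_mul_blockDiag]
    exact mul_mul_mem_interleave_cons (l := []) ⟨_, rfl⟩ ⟨_, rfl⟩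
  obtain ⟨A, B, hA, hB, rfl⟩ := exists_eq_add_of_det_eq_one hν X
  rw [blockUpper_add]
  exact mul_mem_interleave_append (hconj ⟨A, hA⟩) (hconj ⟨B, hB⟩)

lemma blockLower_mem_interleave (hν : Even (Fintype.card ν)) (Y : Matrix ν ν F) :
    blockLower Y ∈ blockDiag.range.interleave
      [blockWeyl 1, blockUpper 1, blockUpper 1, blockWeyl 1] := by
  have : Fact (Even (Fintype.card ν)) := ⟨hν⟩
  rw [blockLower_eq_blockWeyl_mul]
  exact mul_mem_interleave_append (l₂ := []) (mul_mem_interleave_append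
    (mul_mem_interleave_append (mem_interleave_singleton _) (blockUpper_mem_interleave hν _))
    (mem_interleave_singleton _)) ⟨_, rfl⟩

lemma blockWeyl_mem_interleave (hν : Even (Fintype.card ν)) (X : Matrix ν ν F) :
    blockWeyl X ∈ blockDiag.range.interleave ([blockUpper 1, blockUpper 1] ++
      [blockWeyl 1, blockUpper 1, blockUpper 1, blockWeyl 1] ++ [blockUpper 1, blockUpper 1]) :=
  mul_mem_interleave_append (mul_mem_interleave_append (blockUpper_mem_interleave hν X)
    (blockLower_mem_interleave hν _)) (blockUpper_mem_interleave hν X)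

/-- The letters of `blockLower Y * γ * blockWeyl X * blockWeyl (-1) * blockUpper X' * blockLower z`
for `u = blockUpper 1` and `w = blockWeyl 1`. -/
def blockWord {G : Type*} (u w : G) : List G :=
  [w, u, u, w] ++ ([u, u] ++ [w, u, u, w] ++ [u, u]) ++ ([u, u] ++ [w, u, u, w] ++ [u, u]) ++
    [u, u] ++ [w, u, u, w]

lemma eq_or_eq_of_mem_blockWord {G : Type*} {u w x : G} (hx : x ∈ blockWord u w) :
    x = u ∨ x = w := by
  simp only [blockWord, List.mem_append, List.mem_cons, List.not_mem_nil] at hx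
  tauto

theorem mem_interleave_blockWord (hν : Even (Fintype.card ν))
    (g : SpecialLinearGroup (ν ⊕ ν) F) :
    g ∈ blockDiag.range.interleave (blockWord (blockUpper 1) (blockWeyl 1)) := by
  obtain ⟨z, hz⟩ := exists_isUnit_det_toBlocks₁₁_mul_blockLower g
  obtain ⟨Y, γ, hγ, X, X', hg⟩ := exists_eq_blockLower_mul_blockDiag_mul_blockWeyl _ hz
  rw [show g = g * blockLower z * blockLower (-z) by rw [blockLower_neg, mul_inv_cancel_right],
    hg]
  have := mul_mem_interleave_append (mul_mem_interleave_append (mul_mem_interleave_append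
    (mul_mem_interleave_append (mul_mem_interleave_append (l₂ := [])
    (blockLower_mem_interleave hν Y) hγ) (blockWeyl_mem_interleave hν X))
    (blockWeyl_mem_interleave hν (-1))) (blockUpper_mem_interleave hν X'))
    (blockLower_mem_interleave hν (-z))
  simpa [blockWord] using this

end Field

end Matrix.SpecialLinearGroup

def finFourMulSumEquiv (d : ℕ) : Fin (4 * d) ⊕ Fin (4 * d) ≃ Fin (8 * d) :=
  finSumFinEquiv.trans (finCongr (by ring))

lemma reindex_fromBlocks_eq_diagPair {d : ℕ} {F : Type*} [Zero F]
    (A B : Matrix (Fin (4 * d)) (Fin (4 * d)) F) :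
    reindex (finFourMulSumEquiv d) (finFourMulSumEquiv d) (fromBlocks A 0 0 B) =
      diagPair A B := by
  ext i j
  obtain ⟨i, rfl⟩ := (finFourMulSumEquiv d).surjective i
  obtain ⟨j, rfl⟩ := (finFourMulSumEquiv d).surjective j
  rcases i with i | i <;> rcases j with j | j <;>
    simp only [reindex_apply, submatrix_apply, Equiv.symm_apply_apply] <;>
    simp [diagPair, finFourMulSumEquiv]

open SpecialLinearGroup Subgroup

theorem stmt_15_general (d : ℕ → ℕ) (F : ℕ → Type*) [∀ n, Field (F n)] :
    ∃ S : Finset (∀ n, Matrix.SpecialLinearGroup (Fin (8 * d n)) (F n)),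
      Subgroup.closure
        ({g : ∀ n, Matrix.SpecialLinearGroup (Fin (8 * d n)) (F n) |
            ∀ n, ∃ A B : Matrix.SpecialLinearGroup (Fin (4 * d n)) (F n),
              (g n : Matrix (Fin (8 * d n)) (Fin (8 * d n)) (F n)) =
                diagPair (A : Matrix (Fin (4 * d n)) (Fin (4 * d n)) (F n))
                  (B : Matrix (Fin (4 * d n)) (Fin (4 * d n)) (F n))}
          ∪ (S : Set (∀ n, Matrix.SpecialLinearGroup (Fin (8 * d n)) (F n)))) = ⊤ := by
  classical
  let ρ n := SpecialLinearGroup.reindex (R := F n) (finFourMulSumEquiv (d n))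
  let u n := ρ n (blockUpper 1)
  let w n := ρ n (blockWeyl 1)
  refine ⟨{u, w}, eq_top_iff.2 fun g _ => ?_⟩
  have hg : g ∈ (pi Set.univ fun n => blockDiag.range.map (ρ n).toMonoidHom).interleave
      (blockWord u w) := mem_interleave_pi fun n => by
    simpa [blockWord] using map_mem_interleave (ρ n).toMonoidHom
      (mem_interleave_blockWord ⟨2 * d n, by simp; ring⟩ ((ρ n).symm (g n)))
  refine closure_mono (Set.union_subset_union (fun y hy n => ?_) fun y hy => ?_)
    (interleave_subset_closure _ hg)
  · obtain ⟨_, ⟨⟨A, B⟩, rfl⟩, hAB⟩ := mem_map.1 (hy n (Set.mem_univ n))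
    exact ⟨A, B, by rw [← hAB]; exact reindex_fromBlocks_eq_diagPair _ _⟩
  · simpa using eq_or_eq_of_mem_blockWord hy

/-- `∏ n, SL(8dₙ, Fₙ)` is finitely generated over the subgroup
`∏ n, Γₙ` where `Γₙ = {diag(A, B) : A, B ∈ SL(4dₙ, Fₙ)}`. -/
theorem stmt_15 (d : ℕ → ℕ) (hd : ∀ n, 1 ≤ d n) (F : ℕ → Type*)
    [∀ n, Field (F n)] [∀ n, Fintype (F n)] :
    ∃ S : Finset (∀ n, Matrix.SpecialLinearGroup (Fin (8 * d n)) (F n)),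
      Subgroup.closure
        ({g : ∀ n, Matrix.SpecialLinearGroup (Fin (8 * d n)) (F n) |
            ∀ n, ∃ A B : Matrix.SpecialLinearGroup (Fin (4 * d n)) (F n),
              (g n : Matrix (Fin (8 * d n)) (Fin (8 * d n)) (F n)) =
                diagPair (A : Matrix (Fin (4 * d n)) (Fin (4 * d n)) (F n))
                  (B : Matrix (Fin (4 * d n)) (Fin (4 * d n)) (F n))}
          ∪ (S : Set (∀ n, Matrix.SpecialLinearGroup (Fin (8 * d n)) (F n)))) = ⊤ :=
  stmt_15_general d F
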